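/- Let p be an odd prime, Δ⁺ = (ℤ/pℤ)ˣ/⟨σ_{−1}⟩, N⁺ = Σ_{τ∈Δ⁺} τ ∈ ℤ[Δ⁺], and let M : ℤ[Δ⁺] → ℤ[Δ⁺] be multiplication by 1 + p·N⁺ (the adjacency operator of the intermediate cover Y⁺ of the paper's digraph cover). Then, computing determinants of ℤ[u]-linear maps with respect to the basis Δ⁺: det(I − u·M) = (1 − u)^{(p−3)/2} · (1 − (1 + p(p−1)/2)·u) in ℤ[u]; consequently the first nonvanishing Taylor coefficient of det(I − u·M) at u = 1 equals (−1)^{(p−1)/2} · ((p−1)/2) · p, and the torsion subgroup of ℤ[Δ⁺]/(p·N⁺·ℤ[Δ⁺]) has cardinality p. (Paper's Corollary 'plus_part': g_{Y⁺}*(1) = (−1)^{(p−1)/2}·((p−1)/2)·p and #BF(Y⁺)_tors = p.) -/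

import Mathlib

/-!
On the basis `Δ⁺` the norm element `N⁺` acts by the all-ones matrix `J`, so
`I - u·M = (1 - u)·I - p u·J` is a scalar matrix plus a rank-one matrix, whose determinant is
`(1 - u)^(n-1) (1 - u - n p u)` with `n = #Δ⁺ = (p - 1)/2`. Writing `(1 - u)^(n-1)` as
`±(u - 1)^(n-1)` exhibits the order of vanishing at `u = 1` and the leading Taylor coefficient.

For the torsion, `x·N⁺ = ε(x)·N⁺` with `ε` the augmentation, so the ideal `p N⁺ ℤ[Δ⁺]` is just
`pℤ·N⁺`. If a nonzero multiple of `y` lies in it, all coefficients of `y` agree, so `y ∈ ℤ·N⁺`;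
hence the torsion subgroup is `ℤN⁺ / pℤN⁺ ≅ ℤ/p`.
-/

open Polynomial

/-- The group `Δ⁺ = (ℤ/pℤ)ˣ/⟨σ₋₁⟩`, the quotient of `Δ = (ℤ/pℤ)ˣ` by the subgroup generated
by `j = σ₋₁`. -/
def DeltaPlus (p : ℕ) [Fact p.Prime] : Type :=
  (ZMod p)ˣ ⧸ Subgroup.zpowers (-1 : (ZMod p)ˣ)

instance (p : ℕ) [Fact p.Prime] : CommGroup (DeltaPlus p) :=
  QuotientGroup.Quotient.commGroup (Subgroup.zpowers (-1 : (ZMod p)ˣ))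

/-- The norm element `N⁺ = Σ_{τ ∈ Δ⁺} τ ∈ ℤ[Δ⁺]`. -/
noncomputable def normPlus (p : ℕ) [Fact p.Prime] : MonoidAlgebra ℤ (DeltaPlus p) :=
  ∑ᶠ τ : DeltaPlus p, MonoidAlgebra.single τ (1 : ℤ)

/-- The matrix, with respect to the basis `Δ⁺` of `ℤ[Δ⁺]`, of the multiplication-by-
`(1 + p·N⁺)` operator (the adjacency operator of the intermediate cover `Y⁺`): its
`(σ, τ)` entry is the coefficient of `σ` in `(1 + p·N⁺)·τ`, i.e. the value of the group-ring
element `1 + p·N⁺` at `σ·τ⁻¹`. -/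
noncomputable def adjMatPlus (p : ℕ) [Fact p.Prime] :
    Matrix (DeltaPlus p) (DeltaPlus p) ℤ :=
  fun σ τ => ((1 : MonoidAlgebra ℤ (DeltaPlus p)) + (p : ℤ) • normPlus p).coeff (σ * τ⁻¹)

namespace Polynomial

theorem rootMultiplicity_X_sub_C_pow_mul {R : Type*} [CommRing R] (t : R) (k : ℕ) {g : R[X]}
    (hg : g.eval t ≠ 0) : ((X - C t) ^ k * g).rootMultiplicity t = k := by
  have hg0 : g ≠ 0 := by rintro rfl; exact hg eval_zero
  rw [mul_comm, rootMultiplicity_mul_X_sub_C_pow hg0, rootMultiplicity_eq_zero hg, zero_add]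

theorem taylor_coeff_X_sub_C_pow_mul {R : Type*} [CommRing R] (t : R) (k : ℕ) (g : R[X]) :
    (taylor t ((X - C t) ^ k * g)).coeff k = g.eval t := by
  rw [taylor_mul, taylor_pow, map_sub, taylor_X, taylor_C, add_sub_cancel_right,
    coeff_X_pow_mul', if_pos le_rfl, Nat.sub_self, taylor_coeff_zero]

theorem taylor_coeff_rootMultiplicity_one_sub_X_pow_mul {R : Type*} [CommRing R] (k : ℕ)
    {g : R[X]} (hg : g.eval 1 ≠ 0) :
    (taylor 1 ((1 - X) ^ k * g)).coeff (((1 - X) ^ k * g).rootMultiplicity 1) =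
      (-1) ^ k * g.eval 1 := by
  have h_factor : (1 - X) ^ k * g = (X - C 1) ^ k * ((-1) ^ k * g) := by
    rw [← neg_sub, neg_pow, C_1]
    ring
  have h_eval : ((-1) ^ k * g).eval 1 = (-1) ^ k * g.eval 1 := by
    rw [eval_mul, eval_pow, eval_neg, eval_one]
  have h_ne : ((-1) ^ k * g).eval 1 ≠ 0 := by
    rwa [h_eval, Ne, ((isUnit_neg_one (α := R)).pow k).mul_right_eq_zero]
  rw [h_factor, rootMultiplicity_X_sub_C_pow_mul 1 k h_ne, taylor_coeff_X_sub_C_pow_mul, h_eval]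

end Polynomial

namespace Matrix

variable {ι : Type*} [Fintype ι] [DecidableEq ι] [Nonempty ι]

theorem det_smul_one_add_of_const {K : Type*} [Field K] {a : K} (ha : a ≠ 0) (b : K) :
    det (a • (1 : Matrix ι ι K) + of fun _ _ => b) =
      a ^ (Fintype.card ι - 1) * (a + Fintype.card ι * b) := by
  have h_rank_one : a • (1 : Matrix ι ι K) + of (fun _ _ => b) =
      a • (1 + replicateCol Unit (fun _ : ι => b / a) *
        replicateRow Unit (fun _ : ι => (1 : K))) := by
    ext i j
    by_cases h : i = j <;> simp [mul_apply, h, mul_add, mul_div_cancel₀ _ ha]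
  obtain ⟨k, hk⟩ : ∃ k, Fintype.card ι = k + 1 := Nat.exists_eq_add_one.mpr Fintype.card_pos
  rw [h_rank_one, det_smul, det_one_add_replicateCol_mul_replicateRow, hk]
  simp only [dotProduct, one_mul, Finset.sum_const, Finset.card_univ, nsmul_eq_mul, hk,
    Nat.add_sub_cancel]
  field_simp
  ring

theorem det_smul_one_add_of_const_of_isDomain {R : Type*} [CommRing R] [IsDomain R] {a : R}
    (ha : a ≠ 0) (b : R) :
    det (a • (1 : Matrix ι ι R) + of fun _ _ => b) =
      a ^ (Fintype.card ι - 1) * (a + Fintype.card ι * b) := by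
  let φ := algebraMap R (FractionRing R)
  apply IsFractionRing.injective R (FractionRing R)
  have h_map : (a • (1 : Matrix ι ι R) + of fun _ _ => b).map φ =
      φ a • (1 : Matrix ι ι (FractionRing R)) + of fun _ _ => φ b := by
    ext i j
    by_cases h : i = j <;> simp [h]
  rw [RingHom.map_det, RingHom.mapMatrix_apply, h_map,
    det_smul_one_add_of_const ((map_ne_zero_iff φ (IsFractionRing.injective R _)).mpr ha)]
  simp [φ]

end Matrix

theorem ZMod.card_units_quotient_zpowers_neg_one {n : ℕ} (hn : 2 < n) :
    Nat.card ((ZMod n)ˣ ⧸ Subgroup.zpowers (-1 : (ZMod n)ˣ)) = n.totient / 2 := by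
  have : NeZero n := NeZero.of_gt hn
  have : Fact (1 < n) := ⟨by omega⟩
  have h_order : orderOf (-1 : (ZMod n)ˣ) = 2 := by
    rw [← orderOf_units, Units.coe_neg_one, orderOf_neg_one, ZMod.ringChar_zmod_n, if_neg hn.ne']
  have h := Subgroup.card_eq_card_quotient_mul_card_subgroup (Subgroup.zpowers (-1 : (ZMod n)ˣ))
  rw [Nat.card_zpowers, h_order, Nat.card_eq_fintype_card, ZMod.card_units_eq_totient] at h
  omega

namespace MonoidAlgebra

noncomputable def normElement (G : Type*) [Fintype G] : MonoidAlgebra ℤ G :=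
  ∑ g : G, single g 1

variable {G : Type*} [Fintype G]

@[simp]
theorem coeff_normElement (g : G) : (normElement G).coeff g = 1 := by
  classical
  simp [normElement, coeff_sum, coeff_single, Finsupp.single_apply]

theorem coeff_smul_normElement (c : ℤ) (g : G) : (c • normElement G).coeff g = c := by
  rw [coeff_smul_apply, coeff_normElement, smul_eq_mul, mul_one]

theorem eq_coeff_one_smul_normElement [One G] {a c : ℤ} (ha : a ≠ 0) {y : MonoidAlgebra ℤ G}
    (h : a • y = c • normElement G) : y = y.coeff 1 • normElement G := by
  have h_coeff (g : G) : a * y.coeff g = c := by simpa using congrArg (·.coeff g) h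
  ext g
  simpa using mul_left_cancel₀ ha ((h_coeff g).trans (h_coeff 1).symm)

variable [Group G]

theorem single_mul_normElement (g : G) (r : ℤ) :
    single g r * normElement G = r • normElement G := by
  simp only [normElement, Finset.mul_sum, Finset.smul_sum, single_mul_single, mul_one,
    smul_single', mul_one]
  exact Fintype.sum_equiv (Equiv.mulLeft g) _ _ fun _ => rfl

theorem mul_normElement (x : MonoidAlgebra ℤ G) :
    x * normElement G = (∑ g, x.coeff g) • normElement G := by
  classical
  induction x using induction_linear with
  | zero => simp
  | add x y hx hy => simp only [add_mul, hx, hy, coeff_add, Finsupp.add_apply,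
      Finset.sum_add_distrib, add_smul]
  | single g r => simp [single_mul_normElement, coeff_single, Finsupp.single_apply]

theorem mem_span_smul_normElement_iff (m : ℤ) (x : MonoidAlgebra ℤ G) :
    x ∈ Ideal.span {m • normElement G} ↔ ∃ c : ℤ, x = (c * m) • normElement G := by
  rw [Ideal.mem_span_singleton']
  constructor
  · rintro ⟨y, rfl⟩
    exact ⟨∑ g, y.coeff g, by rw [mul_smul_comm, mul_normElement, smul_smul, mul_comm]⟩
  · rintro ⟨c, rfl⟩
    exact ⟨single 1 c, by rw [mul_smul_comm, single_mul_normElement, smul_smul, mul_comm]⟩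

noncomputable def smulNormElementMk (m : ℤ) :
    ℤ →ₗ[ℤ] MonoidAlgebra ℤ G ⧸ Ideal.span {m • normElement G} :=
  (Submodule.mkQ _).restrictScalars ℤ ∘ₗ LinearMap.toSpanSingleton ℤ _ (normElement G)

theorem smulNormElementMk_apply (m c : ℤ) :
    smulNormElementMk m c = Submodule.Quotient.mk (c • normElement G) := rfl

theorem ker_smulNormElementMk (m : ℤ) :
    LinearMap.ker (smulNormElementMk (G := G) m) = Ideal.span {m} := by
  ext c
  rw [LinearMap.mem_ker, smulNormElementMk_apply, Submodule.Quotient.mk_eq_zero,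
    mem_span_smul_normElement_iff, Ideal.mem_span_singleton']
  constructor
  · rintro ⟨d, hd⟩
    exact ⟨d, by simpa only [coeff_smul_normElement] using (congrArg (·.coeff 1) hd).symm⟩
  · rintro ⟨d, rfl⟩
    exact ⟨d, rfl⟩

theorem range_smulNormElementMk {m : ℤ} (hm : m ≠ 0) :
    LinearMap.range (smulNormElementMk (G := G) m) =
      Submodule.torsion ℤ (MonoidAlgebra ℤ G ⧸ Ideal.span {m • normElement G}) := by
  ext x
  rw [LinearMap.mem_range, Submodule.mem_torsion_iff]
  constructor
  · rintro ⟨c, rfl⟩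
    refine ⟨⟨m, mem_nonZeroDivisors_of_ne_zero hm⟩, ?_⟩
    rw [Submonoid.smul_def, ← map_smul, smulNormElementMk_apply, Submodule.Quotient.mk_eq_zero,
      mem_span_smul_normElement_iff]
    exact ⟨c, by rw [smul_eq_mul, mul_comm]⟩
  · rintro ⟨⟨a, ha⟩, hax⟩
    obtain ⟨y, rfl⟩ := Submodule.Quotient.mk_surjective _ x
    rw [Submonoid.smul_def, ← Submodule.Quotient.mk_smul, Submodule.Quotient.mk_eq_zero,
      mem_span_smul_normElement_iff] at hax
    obtain ⟨d, hd⟩ := hax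
    refine ⟨y.coeff 1, ?_⟩
    rw [smulNormElementMk_apply, ← eq_coeff_one_smul_normElement (nonZeroDivisors.ne_zero ha) hd]

theorem card_torsion_quotient_span_smul_normElement {m : ℕ} (hm : m ≠ 0) :
    Nat.card (Submodule.torsion ℤ
      (MonoidAlgebra ℤ G ⧸ Ideal.span {(m : ℤ) • normElement G})) = m := by
  rw [← range_smulNormElementMk (by exact_mod_cast hm),
    ← Nat.card_congr (LinearMap.quotKerEquivRange _).toEquiv, ker_smulNormElementMk,
    Nat.card_congr (Int.quotientSpanNatEquivZMod m).toEquiv, Nat.card_zmod]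

end MonoidAlgebra

section DeltaPlus

variable (p : ℕ) [Fact p.Prime] [Fintype (DeltaPlus p)]

theorem card_deltaPlus (hp : Odd p) : Fintype.card (DeltaPlus p) = (p - 1) / 2 := by
  have h_two_lt : 2 < p := lt_of_le_of_ne (Fact.out : p.Prime).two_le
    (by rintro rfl; exact absurd hp (by decide))
  rw [← Nat.card_eq_fintype_card, DeltaPlus, ZMod.card_units_quotient_zpowers_neg_one h_two_lt,
    Nat.totient_prime Fact.out]

theorem normPlus_eq_normElement : normPlus p = MonoidAlgebra.normElement (DeltaPlus p) :=
  finsum_eq_sum_of_fintype _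

variable [DecidableEq (DeltaPlus p)]

theorem adjMatPlus_eq : adjMatPlus p = 1 + Matrix.of fun _ _ => (p : ℤ) := by
  ext σ τ
  simp only [adjMatPlus, normPlus_eq_normElement, Matrix.add_apply, Matrix.one_apply,
    Matrix.of_apply, MonoidAlgebra.coeff_add, Finsupp.add_apply,
    MonoidAlgebra.coeff_smul_normElement, MonoidAlgebra.one_def, MonoidAlgebra.coeff_single,
    Finsupp.single_apply, eq_comm (a := (1 : DeltaPlus p)), mul_inv_eq_one]

theorem det_one_sub_X_smul_adjMatPlus (hp : Odd p) :
    Matrix.det ((1 : Matrix (DeltaPlus p) (DeltaPlus p) ℤ[X]) -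
        (X : ℤ[X]) • (adjMatPlus p).map C) =
      (1 - X) ^ ((p - 3) / 2) * (1 - C (((1 + p * ((p - 1) / 2) : ℕ) : ℤ)) * X) := by
  have : Nonempty (DeltaPlus p) := ⟨1⟩
  have h_matrix :
      (1 : Matrix (DeltaPlus p) (DeltaPlus p) ℤ[X]) - (X : ℤ[X]) • (adjMatPlus p).map C =
      (1 - X : ℤ[X]) • 1 + Matrix.of fun _ _ => -(C (p : ℤ) * X) := by
    refine Matrix.ext fun σ τ => ?_
    by_cases h : σ = τ <;> simp [adjMatPlus_eq, h] <;> ring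
  have h_ne : (1 - X : ℤ[X]) ≠ 0 := fun h => by simpa using congrArg (eval 0) h
  rw [h_matrix, Matrix.det_smul_one_add_of_const_of_isDomain h_ne, card_deltaPlus p hp]
  obtain ⟨k, rfl⟩ := hp
  rw [show (2 * k + 1 - 1) / 2 = k by omega, show (2 * k + 1 - 3) / 2 = k - 1 by omega]
  simp only [map_natCast, Nat.cast_add, Nat.cast_mul, Nat.cast_one, C_add, C_mul, C_1]
  ring

end DeltaPlus

/-- Paper's Corollary `plus_part`: for the multiplication-by-`(1 + p·N⁺)` operator `M` on
`ℤ[Δ⁺]`, one has `det(I − u·M) = (1 − u)^{(p−3)/2}·(1 − (1 + p(p−1)/2)u)`; consequently the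
first nonvanishing Taylor coefficient of `det(I − u·M)` at `u = 1` equals
`(−1)^{(p−1)/2}·((p−1)/2)·p`, and the torsion subgroup of `ℤ[Δ⁺]/(p·N⁺·ℤ[Δ⁺])` has
cardinality `p`. -/
theorem stmt14 (p : ℕ) [Fact p.Prime] (hp : Odd p)
    [Fintype (DeltaPlus p)] [DecidableEq (DeltaPlus p)] :
    Matrix.det ((1 : Matrix (DeltaPlus p) (DeltaPlus p) (Polynomial ℤ)) -
        (X : Polynomial ℤ) • (adjMatPlus p).map C) =
      (1 - X) ^ ((p - 3) / 2) *
        (1 - C (((1 + p * ((p - 1) / 2) : ℕ) : ℤ)) * X) ∧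
    (Polynomial.taylor 1
        (Matrix.det ((1 : Matrix (DeltaPlus p) (DeltaPlus p) (Polynomial ℤ)) -
          (X : Polynomial ℤ) • (adjMatPlus p).map C))).coeff
        ((Matrix.det ((1 : Matrix (DeltaPlus p) (DeltaPlus p) (Polynomial ℤ)) -
          (X : Polynomial ℤ) • (adjMatPlus p).map C)).rootMultiplicity 1) =
      (-1 : ℤ) ^ ((p - 1) / 2) * (((p - 1) / 2 : ℕ) : ℤ) * (p : ℤ) ∧
    Nat.card (Submodule.torsion ℤ
        (MonoidAlgebra ℤ (DeltaPlus p) ⧸ Ideal.span {(p : ℤ) • normPlus p})) = p := by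
  have h_det := det_one_sub_X_smul_adjMatPlus p hp
  refine ⟨h_det, ?_, ?_⟩
  · obtain ⟨k, h_half, h_half'⟩ : ∃ k, (p - 1) / 2 = k + 1 ∧ (p - 3) / 2 = k := by
      obtain ⟨m, rfl⟩ := hp
      have := (Fact.out : (2 * m + 1).Prime).one_lt
      exact ⟨m - 1, by omega, by omega⟩
    have h_eval :
        (1 - C (((1 + p * ((p - 1) / 2) : ℕ) : ℤ)) * X).eval 1 = -((p : ℤ) * (k + 1)) := by
      rw [h_half, eval_sub, eval_one, eval_mul, eval_C, eval_X]
      push_cast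
      ring
    have h_ne : -((p : ℤ) * (k + 1)) ≠ 0 :=
      neg_ne_zero.mpr (mul_ne_zero (Nat.cast_ne_zero.mpr (Fact.out : p.Prime).ne_zero) (by omega))
    rw [h_det, h_half', taylor_coeff_rootMultiplicity_one_sub_X_pow_mul k (h_eval ▸ h_ne), h_eval,
      h_half]
    push_cast
    ring
  · rw [normPlus_eq_normElement]
    exact MonoidAlgebra.card_torsion_quotient_span_smul_normElement (Fact.out : p.Prime).ne_zero
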